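/- Let μ be a positive Radon measure on ℝ^d which is weakly admissible, i.e., for every continuous compactly supported function f : ℝ^d → ℂ the Fourier transform 𝓕f lies in L²(μ). Then for every continuous compactly supported f : ℝ^d → ℂ, the function g : ℝ^d → ℝ defined by g(t) = ∫_{ℝ^d} ‖𝓕f(x+t)‖² dμ(x) is bounded and uniformly continuous on ℝ^d. -/

import Mathlib

/-!
Weak admissibility makes `g ↦ 𝓕 g` a linear map from the Banach space of bounded continuous
functions vanishing outside a fixed compact set `K` (with the sup norm) into `L²(μ)`. Its graph is
closed: uniform convergence on `K` gives pointwise convergence of the Fourier transforms, and `L²`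
convergence gives a.e. convergence along a subsequence. By the closed graph theorem this map is
bounded.

The translate `x ↦ 𝓕 f (x + t)` is the Fourier transform of the modulation
`v ↦ 𝐞 (-⟪v, t⟫) • f v`, which vanishes outside `tsupport f`, has sup norm at most `‖f‖`, and is
Lipschitz in `t` for the sup norm because `tsupport f` is bounded. So `t ↦ 𝓕 f (· + t)` is a
bounded Lipschitz map into `L²(μ)`, and its squared norm `t ↦ ∫ ‖𝓕 f (x + t)‖² dμ(x)` is bounded
and Lipschitz.
-/

open MeasureTheory BoundedContinuousFunction
open scoped FourierTransform RealInnerProductSpace ENNReal NNReal Real BoundedContinuousFunction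

noncomputable section

theorem MeasureTheory.Lp.norm_sq_eq_integral_norm_sq {α E : Type*} {m : MeasurableSpace α}
    {μ : Measure α} [NormedAddCommGroup E] (F : Lp E 2 μ) :
    ‖F‖ ^ 2 = ∫ a, ‖F a‖ ^ 2 ∂μ := by
  rw [Lp.norm_def, toReal_eLpNorm (Lp.aestronglyMeasurable F),
    lpNorm_eq_integral_norm_rpow_toReal two_ne_zero ENNReal.ofNat_ne_top
      (Lp.aestronglyMeasurable F)]
  simp only [ENNReal.toReal_ofNat, Real.rpow_two]
  exact Real.rpow_inv_natCast_pow (integral_nonneg fun a => by positivity) two_ne_zero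

theorem LipschitzWith.norm_sq {α E : Type*} [PseudoMetricSpace α] [SeminormedAddCommGroup E]
    {K M : ℝ≥0} {F : α → E} (hF : LipschitzWith K F) (hM : ∀ t, ‖F t‖ ≤ M) :
    LipschitzWith (2 * M * K) (fun t => ‖F t‖ ^ 2) := by
  refine LipschitzWith.of_dist_le_mul fun t s => ?_
  rw [Real.dist_eq, sq_sub_sq, abs_mul, abs_of_nonneg (by positivity)]
  calc (‖F t‖ + ‖F s‖) * |‖F t‖ - ‖F s‖| ≤ (2 * M) * (K * dist t s) := by
        gcongr
        · linarith [hM t, hM s]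
        · exact (abs_norm_sub_norm_le _ _).trans
            (by simpa [dist_eq_norm] using hF.dist_le_mul t s)
    _ = ↑(2 * M * K) * dist t s := by push_cast; ring

theorem Real.norm_fourierChar_sub_fourierChar_le (a b : ℝ) :
    ‖(𝐞 a : ℂ) - 𝐞 b‖ ≤ 2 * π * |a - b| := by
  have h : (𝐞 a : ℂ) - 𝐞 b = 𝐞 b * (𝐞 (a - b) - 1) := by
    rw [mul_sub, mul_one, ← Circle.coe_mul, ← AddChar.map_add_eq_mul, add_sub_cancel]
  rw [h, norm_mul, Circle.norm_coe, one_mul, Real.fourierChar_apply, mul_comm _ Complex.I]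
  calc _ ≤ ‖2 * π * (a - b)‖ := by exact_mod_cast Real.norm_exp_I_mul_ofReal_sub_one_le
    _ = _ := by rw [Real.norm_eq_abs, abs_mul, abs_of_pos Real.two_pi_pos]

namespace BoundedContinuousFunction

variable {α 𝕜 E : Type*} [TopologicalSpace α] [NormedField 𝕜] [NormedAddCommGroup E]
  [NormedSpace 𝕜 E] {K : Set α}

variable (𝕜 E) in
def supportedIn (K : Set α) : Submodule 𝕜 (α →ᵇ E) where
  carrier := {g | ∀ x ∉ K, g x = 0}
  add_mem' hg hh x hx := by simp [hg x hx, hh x hx]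
  zero_mem' _ _ := rfl
  smul_mem' c g hg x hx := by simp [hg x hx]

@[simp]
theorem mem_supportedIn {g : α →ᵇ E} : g ∈ supportedIn 𝕜 E K ↔ ∀ x ∉ K, g x = 0 := Iff.rfl

theorem isClosed_supportedIn : IsClosed (supportedIn 𝕜 E K : Set (α →ᵇ E)) := by
  have : (supportedIn 𝕜 E K : Set (α →ᵇ E)) = ⋂ x ∈ Kᶜ, (fun g : α →ᵇ E => g x) ⁻¹' {0} := by
    ext g
    simp
  rw [this]
  exact isClosed_biInter fun x _ => isClosed_singleton.preimage (continuous_eval_const x)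

instance [CompleteSpace E] : CompleteSpace (supportedIn 𝕜 E K) :=
  isClosed_supportedIn.completeSpace_coe

theorem hasCompactSupport_of_mem_supportedIn [T2Space α] (hK : IsCompact K) {g : α →ᵇ E}
    (hg : g ∈ supportedIn 𝕜 E K) : HasCompactSupport g :=
  HasCompactSupport.intro hK hg

end BoundedContinuousFunction

section CodRestrictLp

variable {𝕜 X α E : Type*} [NontriviallyNormedField 𝕜] [NormedAddCommGroup X] [NormedSpace 𝕜 X]
  {m : MeasurableSpace α} {μ : Measure α} [NormedAddCommGroup E] [NormedSpace 𝕜 E]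
  {p : ℝ≥0∞} (ℓ : X →ₗ[𝕜] α → E) (hℓ : ∀ x, MemLp (ℓ x) p μ)

def LinearMap.codRestrictLp : X →ₗ[𝕜] Lp E p μ where
  toFun x := (hℓ x).toLp (ℓ x)
  map_add' x y := ((hℓ _).toLp_congr ((hℓ x).add (hℓ y)) (.of_eq (map_add ℓ x y))).trans
    (MemLp.toLp_add _ _)
  map_smul' c x := ((hℓ _).toLp_congr ((hℓ x).const_smul c) (.of_eq (map_smul ℓ c x))).trans
    (MemLp.toLp_const_smul c _)

theorem LinearMap.coeFn_codRestrictLp (x : X) : ℓ.codRestrictLp hℓ x =ᵐ[μ] ℓ x :=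
  (hℓ x).coeFn_toLp

theorem LinearMap.continuous_codRestrictLp [Fact (1 ≤ p)] [CompleteSpace X] [CompleteSpace E]
    (hcont : ∀ a, Continuous fun x => ℓ x a) : Continuous (ℓ.codRestrictLp hℓ) := by
  refine (ℓ.codRestrictLp hℓ).continuous_of_seq_closed_graph fun u x y hu hy => ?_
  obtain ⟨ns, hns, hae⟩ := (tendstoInMeasure_of_tendsto_Lp hy).exists_seq_tendsto_ae
  refine Lp.ext ?_
  filter_upwards [hae, ae_all_iff.2 fun n => ℓ.coeFn_codRestrictLp hℓ (u n),
    ℓ.coeFn_codRestrictLp hℓ x] with a hya hua hxa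
  rw [hxa]
  refine tendsto_nhds_unique hya ?_
  simp only [Function.comp_apply, hua]
  exact ((hcont a).tendsto x).comp (hu.comp hns.tendsto_atTop)

end CodRestrictLp

section Fourier

variable {V E : Type*} [NormedAddCommGroup V] [InnerProductSpace ℝ V] [NormedAddCommGroup E]
  [NormedSpace ℂ E] {K : Set V}

namespace BoundedContinuousFunction

def modulate (f : V →ᵇ E) (t : V) : V →ᵇ E :=
  ofNormedAddCommGroup (fun v => 𝐞 (-⟪v, t⟫) • f v)
    ((Real.continuous_fourierChar.comp (continuous_id.inner continuous_const).neg).smul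
      f.continuous) ‖f‖ fun v => by rw [Circle.norm_smul]; exact f.norm_coe_le_norm v

theorem modulate_apply (f : V →ᵇ E) (t v : V) : modulate f t v = 𝐞 (-⟪v, t⟫) • f v := rfl

theorem norm_modulate_le (f : V →ᵇ E) (t : V) : ‖modulate f t‖ ≤ ‖f‖ :=
  norm_ofNormedAddCommGroup_le _ (norm_nonneg f) _

theorem modulate_mem_supportedIn {f : V →ᵇ E} (hf : f ∈ supportedIn ℂ E K) (t : V) :
    modulate f t ∈ supportedIn ℂ E K := fun v hv => by simp [modulate_apply, hf v hv]

theorem lipschitzWith_modulate {f : V →ᵇ E} {R : ℝ} (hR0 : 0 ≤ R)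
    (hR : ∀ v, f v ≠ 0 → ‖v‖ ≤ R) :
    LipschitzWith (2 * π * R * ‖f‖).toNNReal (modulate f) := by
  refine LipschitzWith.of_dist_le' fun t s => (dist_le (by positivity)).2 fun v => ?_
  by_cases hv : f v = 0
  · simp only [modulate_apply, hv, smul_zero, dist_self]
    positivity
  have hphase : |-⟪v, t⟫ - -⟪v, s⟫| ≤ R * dist t s := by
    rw [neg_sub_neg, ← inner_sub_right, dist_eq_norm']
    exact (abs_real_inner_le_norm _ _).trans (by gcongr; exact hR v hv)
  rw [modulate_apply, modulate_apply, Circle.smul_def, Circle.smul_def, dist_eq_norm, ← sub_smul,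
    norm_smul]
  calc ‖(𝐞 (-⟪v, t⟫) : ℂ) - 𝐞 (-⟪v, s⟫)‖ * ‖f v‖ ≤ 2 * π * (R * dist t s) * ‖f‖ := by
        gcongr
        · exact (Real.norm_fourierChar_sub_fourierChar_le _ _).trans (by gcongr)
        · exact f.norm_coe_le_norm v
    _ = 2 * π * R * ‖f‖ * dist t s := by ring

variable [FiniteDimensional ℝ V] [MeasurableSpace V] [BorelSpace V]

theorem fourier_modulate (f : V →ᵇ E) (t w : V) :
    𝓕 (modulate f t : V → E) w = 𝓕 (f : V → E) (w + t) := by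
  simp only [Real.fourier_eq, modulate_apply, smul_smul, ← AddChar.map_add_eq_mul,
    inner_add_right, neg_add]

theorem integrable_of_mem_supportedIn (hK : IsCompact K) (g : supportedIn ℂ E K) :
    Integrable (g : V → E) :=
  (g : V →ᵇ E).continuous.integrable_of_hasCompactSupport
    (hasCompactSupport_of_mem_supportedIn hK g.2)

theorem norm_fourier_le_of_mem_supportedIn (hK : IsCompact K) (g : supportedIn ℂ E K) (w : V) :
    ‖𝓕 (g : V → E) w‖ ≤ volume.real K * ‖g‖ := by
  calc ‖𝓕 (g : V → E) w‖ ≤ ∫ v, ‖(g : V → E) v‖ :=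
        VectorFourier.norm_fourierIntegral_le_integral_norm _ _ _ _ _
    _ = ∫ v in K, ‖(g : V → E) v‖ :=
        (setIntegral_eq_integral_of_forall_compl_eq_zero fun v hv => by simp [g.2 v hv]).symm
    _ ≤ ‖∫ v in K, ‖(g : V → E) v‖‖ := Real.le_norm_self _
    _ ≤ ‖g‖ * volume.real K :=
        norm_setIntegral_le_of_norm_le_const hK.measure_lt_top fun v _ =>
          (norm_norm _).trans_le ((g : V →ᵇ E).norm_coe_le_norm v)
    _ = volume.real K * ‖g‖ := mul_comm _ _

variable (E) in
def fourierₗ (hK : IsCompact K) : supportedIn ℂ E K →ₗ[ℂ] V → E where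
  toFun g := 𝓕 (g : V → E)
  map_add' g h := VectorFourier.fourierIntegral_add Real.continuous_fourierChar continuous_inner
    (integrable_of_mem_supportedIn hK g) (integrable_of_mem_supportedIn hK h)
  map_smul' c _ := VectorFourier.fourierIntegral_const_smul _ _ _ _ c

end BoundedContinuousFunction

variable [FiniteDimensional ℝ V] [MeasurableSpace V] [BorelSpace V]

variable (E) in
def MeasureTheory.Measure.WeaklyAdmissible (μ : Measure V) : Prop :=
  ∀ f : V → E, Continuous f → HasCompactSupport f → MemLp (𝓕 f) 2 μ

namespace MeasureTheory.Measure.WeaklyAdmissible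

variable [CompleteSpace E] {μ : Measure V} (hμ : μ.WeaklyAdmissible E) (hK : IsCompact K)

def fourierCLM : supportedIn ℂ E K →L[ℂ] Lp E 2 μ where
  toLinearMap := (fourierₗ E hK).codRestrictLp fun g =>
    hμ _ (g : V →ᵇ E).continuous (hasCompactSupport_of_mem_supportedIn hK g.2)
  cont := LinearMap.continuous_codRestrictLp _ _ fun w =>
    AddMonoidHomClass.continuous_of_bound ((LinearMap.proj w).comp (fourierₗ E hK))
      (volume.real K) fun g => norm_fourier_le_of_mem_supportedIn hK g w

theorem fourierCLM_ae_eq (g : supportedIn ℂ E K) :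
    hμ.fourierCLM hK g =ᵐ[μ] 𝓕 (g : V → E) :=
  LinearMap.coeFn_codRestrictLp _ _ g

end MeasureTheory.Measure.WeaklyAdmissible

end Fourier

theorem fourierTransformable_sap_stmt1_general {d : ℕ}
    (μ : Measure (EuclideanSpace ℝ (Fin d)))
    (hadm : ∀ f : EuclideanSpace ℝ (Fin d) → ℂ, Continuous f → HasCompactSupport f →
      MemLp (𝓕 f) 2 μ)
    (f : EuclideanSpace ℝ (Fin d) → ℂ) (hf : Continuous f) (hfc : HasCompactSupport f) :
    (∃ C : ℝ, ∀ t : EuclideanSpace ℝ (Fin d), |∫ x, ‖𝓕 f (x + t)‖ ^ 2 ∂μ| ≤ C) ∧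
      UniformContinuous (fun t : EuclideanSpace ℝ (Fin d) => ∫ x, ‖𝓕 f (x + t)‖ ^ 2 ∂μ) := by
  let f₀ : supportedIn ℂ ℂ (tsupport f) :=
    ⟨ofCompactSupport f hf hfc, fun _ hx => image_eq_zero_of_notMem_tsupport hx⟩
  obtain ⟨R, hR0, hR⟩ := hfc.isBounded.exists_pos_norm_le
  have hfR : ∀ v, f v ≠ 0 → ‖v‖ ≤ R := fun v hv => hR v (subset_tsupport f hv)
  have hμ : μ.WeaklyAdmissible ℂ := hadm
  let T := hμ.fourierCLM hfc
  let F t := T ⟨modulate f₀ t, modulate_mem_supportedIn f₀.2 t⟩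
  have hF : ∀ t, ∫ x, ‖𝓕 f (x + t)‖ ^ 2 ∂μ = ‖F t‖ ^ 2 := fun t => by
    rw [Lp.norm_sq_eq_integral_norm_sq]
    refine integral_congr_ae ?_
    filter_upwards [hμ.fourierCLM_ae_eq hfc _] with x hx
    rw [hx]
    exact congrArg (‖·‖ ^ 2) (fourier_modulate (f₀ : _ →ᵇ ℂ) t x).symm
  have hF_le : ∀ t, ‖F t‖ ≤ ↑(‖T‖₊ * ‖f₀‖₊) := fun t =>
    (T.le_opNorm _).trans (mul_le_mul_of_nonneg_left (norm_modulate_le _ t) (norm_nonneg T))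
  have hF_lip : LipschitzWith _ F := T.lipschitz.comp
    ((lipschitzWith_modulate hR0.le hfR).subtype_mk (modulate_mem_supportedIn f₀.2))
  simp_rw [hF]
  refine ⟨⟨(‖T‖₊ * ‖f₀‖₊ : ℝ≥0) ^ 2, fun t => ?_⟩, (hF_lip.norm_sq hF_le).uniformContinuous⟩
  rw [abs_of_nonneg (sq_nonneg _)]
  exact pow_le_pow_left₀ (norm_nonneg _) (hF_le t) 2

/-- If a positive Radon measure `μ` on `ℝ^d` is weakly admissible, then for every
continuous compactly supported `f : ℝ^d → ℂ` the function `t ↦ ∫ ‖𝓕f(x+t)‖² dμ(x)` is bounded and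
uniformly continuous. -/
theorem fourierTransformable_sap_stmt1 {d : ℕ}
    (μ : Measure (EuclideanSpace ℝ (Fin d))) [μ.Regular]
    (hadm : ∀ f : EuclideanSpace ℝ (Fin d) → ℂ, Continuous f → HasCompactSupport f →
      MemLp (𝓕 f) 2 μ)
    (f : EuclideanSpace ℝ (Fin d) → ℂ) (hf : Continuous f) (hfc : HasCompactSupport f) :
    (∃ C : ℝ, ∀ t : EuclideanSpace ℝ (Fin d), |∫ x, ‖𝓕 f (x + t)‖ ^ 2 ∂μ| ≤ C) ∧
      UniformContinuous (fun t : EuclideanSpace ℝ (Fin d) => ∫ x, ‖𝓕 f (x + t)‖ ^ 2 ∂μ) :=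
  fourierTransformable_sap_stmt1_general μ hadm f hf hfc
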